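/- For every integer d ≥ 0 and every real t, the complete Fermi–Dirac integral satisfies ∫₀^∞ x^d / (1 + e^{x-t}) dx = -d! · Li_{d+1}(-e^t), where Li_{d+1}(z) = Σ_{k≥1} z^k / k^{d+1} for |z| ≤ 1, extended by the integral recursion Li_{j+1}(x) = ∫₀^x Li_j(s)/s ds to negative arguments. -/

import Mathlib

/-! Write `F_d(t)` for the integral. Differentiating under the integral sign and integrating by
parts gives `F_{d+1}' = (d + 1) F_d`, and `F_0(t) = log (1 + e^t)`. On the other side, the integral
recursion for `Li` gives `d/dt Li_{j+2}(-e^t) = Li_{j+1}(-e^t)`, so `G_d(t) = -d! Li_{d+1}(-e^t)`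
satisfies the same recursion with `G_0 = F_0`. Both `F_d` and `G_d` tend to `0` as `t → -∞`,
hence they agree by induction on `d`. -/

open scoped Nat

/-- The polylogarithm, defined recursively by `Li 1 x = -log (1 - x)` and
`Li (k+1) x = ∫ s in 0..x, Li k s / s`; for `|x| ≤ 1` this agrees with the
series `Σ_{k≥1} x^k / k^{j}`. -/
noncomputable def Li : ℕ → ℝ → ℝ
  | 0, _ => 0
  | 1, x => -Real.log (1 - x)
  | k + 2, x => ∫ s in (0:ℝ)..x, Li (k + 1) s / s

open Real MeasureTheory Set Filter Topology

noncomputable def fermi (u : ℝ) : ℝ := (1 + exp u)⁻¹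

lemma fermi_pos (u : ℝ) : 0 < fermi u := by unfold fermi; positivity

lemma fermi_le_one (u : ℝ) : fermi u ≤ 1 :=
  inv_le_one_of_one_le₀ (le_add_of_nonneg_right (exp_nonneg u))

lemma fermi_le_exp_neg (u : ℝ) : fermi u ≤ exp (-u) := by
  rw [fermi, exp_neg]
  exact inv_anti₀ (exp_pos u) (le_add_of_nonneg_left zero_le_one)

@[fun_prop]
lemma continuous_fermi : Continuous fermi :=
  (continuous_const.add continuous_exp).inv₀ fun u => (add_pos one_pos (exp_pos u)).ne'

lemma hasDerivAt_fermi (u : ℝ) : HasDerivAt fermi (-(fermi u * (1 - fermi u))) u := by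
  have h : 1 + exp u ≠ 0 := (add_pos one_pos (exp_pos u)).ne'
  unfold fermi
  refine (((hasDerivAt_exp u).const_add 1).inv h).congr_deriv ?_
  field_simp
  ring

lemma abs_fermi_mul_one_sub_le (u : ℝ) : |fermi u * (1 - fermi u)| ≤ fermi u := by
  rw [abs_of_nonneg (mul_nonneg (fermi_pos u).le (sub_nonneg.2 (fermi_le_one u)))]
  exact mul_le_of_le_one_right (fermi_pos u).le (sub_le_self _ (fermi_pos u).le)

lemma hasDerivAt_neg_log_one_add_exp_neg (u : ℝ) :
    HasDerivAt (fun u => -log (1 + exp (-u))) (fermi u) u := by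
  have h : 1 + exp (-u) ≠ 0 := (add_pos one_pos (exp_pos _)).ne'
  refine (((hasDerivAt_neg u).exp.const_add 1).log h).neg.congr_deriv ?_
  rw [fermi, exp_neg]
  field_simp
  ring

noncomputable def fermiDirac (d : ℕ) (t : ℝ) : ℝ := ∫ x in Ioi 0, x ^ d * fermi (x - t)

lemma integrableOn_pow_mul_exp_neg (d : ℕ) :
    IntegrableOn (fun x : ℝ => x ^ d * exp (-x)) (Ioi 0) := by
  simpa [mul_comm] using GammaIntegral_convergent (s := d + 1) (by positivity)

lemma integrableOn_Ioi_of_norm_le_pow_mul_exp_neg {f : ℝ → ℝ} (hf : Continuous f) (d : ℕ)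
    (C : ℝ) (hbound : ∀ x > 0, ‖f x‖ ≤ C * (x ^ d * exp (-x))) : IntegrableOn f (Ioi 0) :=
  ((integrableOn_pow_mul_exp_neg d).const_mul C).mono' hf.aestronglyMeasurable
    ((ae_restrict_mem measurableSet_Ioi).mono hbound)

lemma pow_mul_fermi_le (d : ℕ) (t : ℝ) {x : ℝ} (hx : 0 ≤ x) :
    x ^ d * fermi (x - t) ≤ exp t * (x ^ d * exp (-x)) :=
  calc x ^ d * fermi (x - t) ≤ x ^ d * exp (-(x - t)) := by gcongr; exact fermi_le_exp_neg _
    _ = exp t * (x ^ d * exp (-x)) := by rw [neg_sub, sub_eq_add_neg, exp_add]; ring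

lemma norm_pow_mul_fermi_mul_one_sub_le (d : ℕ) (t : ℝ) {x : ℝ} (hx : 0 ≤ x) :
    ‖x ^ d * (fermi (x - t) * (1 - fermi (x - t)))‖ ≤ exp t * (x ^ d * exp (-x)) :=
  calc ‖x ^ d * (fermi (x - t) * (1 - fermi (x - t)))‖
      ≤ x ^ d * fermi (x - t) := by
        rw [norm_mul, norm_of_nonneg (pow_nonneg hx d)]
        gcongr
        exact abs_fermi_mul_one_sub_le _
    _ ≤ exp t * (x ^ d * exp (-x)) := pow_mul_fermi_le d t hx

lemma integrableOn_pow_mul_fermi (d : ℕ) (t : ℝ) :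
    IntegrableOn (fun x => x ^ d * fermi (x - t)) (Ioi 0) :=
  integrableOn_Ioi_of_norm_le_pow_mul_exp_neg (by fun_prop) d (exp t) fun x hx => by
    rw [norm_of_nonneg (mul_nonneg (pow_nonneg hx.le d) (fermi_pos _).le)]
    exact pow_mul_fermi_le d t hx.le

lemma integrableOn_pow_mul_fermi_mul_one_sub (d : ℕ) (t : ℝ) :
    IntegrableOn (fun x => x ^ d * (fermi (x - t) * (1 - fermi (x - t)))) (Ioi 0) :=
  integrableOn_Ioi_of_norm_le_pow_mul_exp_neg (by fun_prop) d (exp t) fun x hx =>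
    norm_pow_mul_fermi_mul_one_sub_le d t hx.le

lemma hasDerivAt_fermiDirac (d : ℕ) (t₀ : ℝ) :
    HasDerivAt (fermiDirac d)
      (∫ x in Ioi 0, x ^ d * (fermi (x - t₀) * (1 - fermi (x - t₀)))) t₀ := by
  have hderiv (x t : ℝ) : HasDerivAt (fun t => x ^ d * fermi (x - t))
      (x ^ d * (fermi (x - t) * (1 - fermi (x - t)))) t :=
    (((hasDerivAt_fermi (x - t)).comp_const_sub x t).const_mul (x ^ d)).congr_deriv (by ring)
  have hbound : ∀ᵐ x ∂volume.restrict (Ioi (0 : ℝ)), ∀ t ∈ Metric.ball t₀ 1,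
      ‖x ^ d * (fermi (x - t) * (1 - fermi (x - t)))‖
        ≤ exp (t₀ + 1) * (x ^ d * exp (-x)) := by
    filter_upwards [ae_restrict_mem measurableSet_Ioi] with x hx t ht
    have ht_le : t ≤ t₀ + 1 := by rw [Metric.mem_ball, Real.dist_eq, abs_lt] at ht; linarith
    refine (norm_pow_mul_fermi_mul_one_sub_le d t (le_of_lt hx)).trans ?_
    have : 0 ≤ x ^ d * exp (-x) := mul_nonneg (pow_nonneg (le_of_lt hx) d) (exp_pos _).le
    gcongr
  exact (hasDerivAt_integral_of_dominated_loc_of_deriv_le (Metric.ball_mem_nhds t₀ one_pos)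
    (.of_forall fun t => (integrableOn_pow_mul_fermi d t).aestronglyMeasurable)
    (integrableOn_pow_mul_fermi d t₀)
    (integrableOn_pow_mul_fermi_mul_one_sub d t₀).aestronglyMeasurable hbound
    ((integrableOn_pow_mul_exp_neg d).const_mul _)
    (.of_forall fun x t _ => hderiv x t)).2

lemma tendsto_pow_mul_fermi_atTop (d : ℕ) (t : ℝ) :
    Tendsto (fun x => x ^ d * fermi (x - t)) atTop (𝓝 0) := by
  refine squeeze_zero' ?_ ?_
    (by simpa using (tendsto_pow_mul_exp_neg_atTop_nhds_zero d).const_mul (exp t))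
  · filter_upwards [eventually_ge_atTop 0] with x hx
    exact mul_nonneg (pow_nonneg hx d) (fermi_pos _).le
  · filter_upwards [eventually_ge_atTop 0] with x hx
    exact pow_mul_fermi_le d t hx

lemma integral_pow_succ_mul_fermi_mul_one_sub (d : ℕ) (t : ℝ) :
    ∫ x in Ioi 0, x ^ (d + 1) * (fermi (x - t) * (1 - fermi (x - t)))
      = (d + 1) * fermiDirac d t := by
  have hibp := integral_Ioi_mul_deriv_eq_deriv_mul (a := 0) (a' := 0) (b' := 0)
    (u := fun x => x ^ (d + 1)) (v := fun x => fermi (x - t))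
    (fun x _ => hasDerivAt_pow (d + 1) x)
    (fun x _ => (hasDerivAt_fermi (x - t)).comp_sub_const x t)
    ?_ ?_ ?_ (tendsto_pow_mul_fermi_atTop (d + 1) t)
  · simp only [mul_neg, integral_neg, neg_zero, zero_sub, neg_inj, add_tsub_cancel_right] at hibp
    rw [hibp, fermiDirac, ← integral_const_mul]
    push_cast
    congr 1 with x
    ring
  · simpa [Pi.mul_def] using (integrableOn_pow_mul_fermi_mul_one_sub (d + 1) t).neg
  · exact IntegrableOn.congr_fun ((integrableOn_pow_mul_fermi d t).const_mul (d + 1 : ℝ))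
      (fun x _ => by simp only [Pi.mul_apply, add_tsub_cancel_right, Nat.cast_add_one]; ring)
      measurableSet_Ioi
  · have : Continuous fun x => x ^ (d + 1) * fermi (x - t) := by fun_prop
    simpa [Pi.mul_def] using (this.tendsto 0).mono_left nhdsWithin_le_nhds

lemma hasDerivAt_fermiDirac_succ (d : ℕ) (t : ℝ) :
    HasDerivAt (fermiDirac (d + 1)) ((d + 1) * fermiDirac d t) t :=
  integral_pow_succ_mul_fermi_mul_one_sub d t ▸ hasDerivAt_fermiDirac (d + 1) t

lemma fermiDirac_zero (t : ℝ) : fermiDirac 0 t = log (1 + exp t) := by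
  have hexp : Tendsto (fun x => exp (-(x - t))) atTop (𝓝 0) :=
    (tendsto_exp_neg_atTop_nhds_zero.comp (tendsto_atTop_add_const_right _ (-t) tendsto_id)).congr
      fun x => by simp [sub_eq_add_neg]
  have h := integral_Ioi_of_hasDerivAt_of_tendsto' (a := 0)
    (fun x _ => (hasDerivAt_neg_log_one_add_exp_neg (x - t)).comp_sub_const x t)
    (by simpa using integrableOn_pow_mul_fermi 0 t)
    ((hexp.const_add 1).log (by norm_num)).neg
  simpa [fermiDirac] using h

lemma tendsto_fermiDirac_atBot (d : ℕ) : Tendsto (fermiDirac d) atBot (𝓝 0) := by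
  refine squeeze_zero (fun t => setIntegral_nonneg measurableSet_Ioi fun x hx =>
      mul_nonneg (pow_nonneg (le_of_lt hx) d) (fermi_pos _).le) (fun t => ?_)
    (by simpa using tendsto_exp_atBot.mul_const (∫ x in Ioi 0, x ^ d * exp (-x)))
  rw [← integral_const_mul]
  exact setIntegral_mono_on (integrableOn_pow_mul_fermi d t)
    ((integrableOn_pow_mul_exp_neg d).const_mul _) measurableSet_Ioi
    fun x hx => pow_mul_fermi_le d t (le_of_lt hx)

section IntegralDivSelf

variable {f : ℝ → ℝ}

lemma abs_integral_div_self_le (hf : ∀ s ≤ 0, |f s| ≤ |s|) {x : ℝ} (hx : x ≤ 0) :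
    |∫ s in 0..x, f s / s| ≤ |x| := by
  have hle : ∀ s ∈ uIoc 0 x, ‖f s / s‖ ≤ 1 := fun s hs => by
    rw [norm_div]
    exact div_le_one_of_le₀ (hf s (hs.2.trans (max_le le_rfl hx))) (norm_nonneg _)
  simpa using intervalIntegral.norm_integral_le_of_norm_le_const hle

lemma intervalIntegrable_div_self (hcont : ContinuousOn f (Iio 0)) (hf : ∀ s ≤ 0, |f s| ≤ |s|)
    {x : ℝ} (hx : x ≤ 0) : IntervalIntegrable (fun s => f s / s) volume 0 x := by
  refine ((intervalIntegrable_iff_integrableOn_Ioo_of_le hx).2 ?_).symm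
  refine IntegrableOn.of_bound measure_Ioo_lt_top
    (((hcont.mono Ioo_subset_Iio_self).div continuousOn_id fun s hs => hs.2.ne)
      |>.aestronglyMeasurable measurableSet_Ioo) 1 ?_
  filter_upwards [ae_restrict_mem measurableSet_Ioo] with s hs
  rw [norm_div]
  exact div_le_one_of_le₀ (hf s hs.2.le) (norm_nonneg _)

lemma hasDerivAt_integral_div_self (hcont : ContinuousOn f (Iio 0))
    (hf : ∀ s ≤ 0, |f s| ≤ |s|) {x : ℝ} (hx : x < 0) :
    HasDerivAt (fun y => ∫ s in 0..y, f s / s) (f x / x) x :=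
  intervalIntegral.integral_hasDerivAt_right (intervalIntegrable_div_self hcont hf hx.le)
    ((hcont.div continuousOn_id fun _ hs => hs.ne).stronglyMeasurableAtFilter isOpen_Iio x hx)
    ((hcont.continuousAt (Iio_mem_nhds hx)).div continuousAt_id hx.ne)

end IntegralDivSelf

/-- The bound keeps `Li (j + 1) s / s` bounded near `0`, so the next integral of the recursion
exists and is again of this kind. -/
lemma abs_Li_le_and_continuousOn (j : ℕ) :
    (∀ s ≤ 0, |Li (j + 1) s| ≤ |s|) ∧ ContinuousOn (Li (j + 1)) (Iio 0) := by
  induction j with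
  | zero =>
    refine ⟨fun s hs => ?_, ?_⟩
    · have hlog : 0 ≤ log (1 - s) := log_nonneg (by linarith)
      have hlog' : log (1 - s) ≤ -s := by
        linarith [log_le_sub_one_of_pos (by linarith : 0 < 1 - s)]
      rw [Li, abs_neg, abs_of_nonneg hlog, abs_of_nonpos hs]
      exact hlog'
    · exact (ContinuousOn.log (by fun_prop) fun s hs =>
        (sub_pos.2 (hs.out.trans one_pos)).ne').neg
  | succ j ih =>
    obtain ⟨hbound, hcont⟩ := ih
    exact ⟨fun s hs => abs_integral_div_self_le hbound hs,
      fun x hx => (hasDerivAt_integral_div_self hcont hbound hx).continuousAt.continuousWithinAt⟩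

lemma hasDerivAt_Li_add_two (j : ℕ) {x : ℝ} (hx : x < 0) :
    HasDerivAt (Li (j + 2)) (Li (j + 1) x / x) x :=
  hasDerivAt_integral_div_self (abs_Li_le_and_continuousOn j).2 (abs_Li_le_and_continuousOn j).1 hx

lemma hasDerivAt_Li_neg_exp (j : ℕ) (t : ℝ) :
    HasDerivAt (fun t => Li (j + 2) (-exp t)) (Li (j + 1) (-exp t)) t := by
  have hne : -exp t ≠ 0 := neg_ne_zero.2 (exp_ne_zero t)
  exact ((hasDerivAt_Li_add_two j (neg_neg_of_pos (exp_pos t))).comp t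
    (hasDerivAt_exp t).neg).congr_deriv (div_mul_cancel₀ _ hne)

lemma tendsto_Li_neg_exp_atBot (j : ℕ) : Tendsto (fun t => Li (j + 1) (-exp t)) atBot (𝓝 0) :=
  squeeze_zero_norm (fun t => by
      simpa using (abs_Li_le_and_continuousOn j).1 _ (neg_nonpos.2 (exp_pos t).le))
    tendsto_exp_atBot

lemma eq_of_hasDerivAt_of_tendsto_atBot {f g f' : ℝ → ℝ} {a : ℝ}
    (hf : ∀ t, HasDerivAt f (f' t) t) (hg : ∀ t, HasDerivAt g (f' t) t)
    (hfa : Tendsto f atBot (𝓝 a)) (hga : Tendsto g atBot (𝓝 a)) : f = g := by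
  have hconst : ∀ s t, f s - g s = f t - g t := is_const_of_deriv_eq_zero
    (fun t => ((hf t).sub (hg t)).differentiableAt)
    fun t => ((hf t).sub (hg t)).deriv.trans (sub_self _)
  have hlim : Tendsto (fun t => f t - g t) atBot (𝓝 0) := by simpa using hfa.sub hga
  funext t
  have := tendsto_nhds_unique tendsto_const_nhds (hlim.congr fun s => hconst s t)
  exact sub_eq_zero.1 this

lemma fermiDirac_eq_neg_factorial_mul_Li (d : ℕ) :
    fermiDirac d = fun t => -(d ! : ℝ) * Li (d + 1) (-exp t) := by
  induction d with
  | zero =>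
    funext t
    simp [fermiDirac_zero, Li]
  | succ d ih =>
    refine eq_of_hasDerivAt_of_tendsto_atBot (hasDerivAt_fermiDirac_succ d) (fun t => ?_)
      (tendsto_fermiDirac_atBot _)
      (by simpa using (tendsto_Li_neg_exp_atBot (d + 1)).const_mul (-((d + 1)! : ℝ)))
    refine ((hasDerivAt_Li_neg_exp d t).const_mul _).congr_deriv ?_
    rw [ih, Nat.factorial_succ]
    push_cast
    ring

/-- The complete Fermi–Dirac integral:
`∫₀^∞ x^d / (1 + e^{x-t}) dx = -d! · Li_{d+1}(-e^t)` for every `d ≥ 0` and real `t`. -/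
theorem fermi_dirac_integral_eq_polylog (d : ℕ) (t : ℝ) :
    ∫ x in Set.Ioi (0:ℝ), x ^ d / (1 + Real.exp (x - t))
      = -(d ! : ℝ) * Li (d + 1) (-Real.exp t) := by
  simpa [fermiDirac, fermi, div_eq_mul_inv] using congrFun (fermiDirac_eq_neg_factorial_mul_Li d) t
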